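/- Let Ω be an infinite set, A a partition of Ω, G = S_(A) ≤ Sym(Ω), and κ an infinite regular cardinal ≤ |Ω|. Then: (a) if some member of A has cardinality ≥ κ, there is no κ-uncrowded generalized metric on Ω with respect to which all elements of G are bounded; (b) if all members of A have cardinality < κ but there is no common bound λ < κ for these cardinalities, then there is a κ-uncrowded generalized metric on Ω with respect to which all elements of G are bounded, but no uniformly κ-uncrowded generalized metric with this property; (c) if all members of A have cardinality ≤ λ for some λ < κ, then there is a uniformly κ-uncrowded generalized metric on Ω with respect to which all elements of G are bounded. -/

import Mathlib

open scoped Cardinal ENNReal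

universe u

variable {Ω : Type u}

/-- The pointwise stabilizer of a set `s` inside a subgroup `G` of `Sym(Ω)`. -/
def pstab (G : Subgroup (Equiv.Perm Ω)) (s : Set Ω) : Subgroup (Equiv.Perm Ω) where
  carrier := {g | g ∈ G ∧ ∀ x ∈ s, g x = x}
  one_mem' := ⟨G.one_mem, fun _ _ => rfl⟩
  mul_mem' := by
    rintro a b ⟨haG, ha⟩ ⟨hbG, hb⟩
    refine ⟨G.mul_mem haG hbG, fun x hx => ?_⟩
    simp [Equiv.Perm.mul_apply, hb x hx, ha x hx]
  inv_mem' := by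
    rintro a ⟨haG, ha⟩
    refine ⟨G.inv_mem haG, fun x hx => ?_⟩
    conv_lhs => rw [← ha x hx]
    exact Equiv.symm_apply_apply a x

/-- For a family `A` of subsets of `Ω`, the subgroup of permutations carrying each
member of `A` onto itself. -/
def SAgrp (A : Set (Set Ω)) : Subgroup (Equiv.Perm Ω) where
  carrier := {f | ∀ s ∈ A, (f : Ω → Ω) '' s = s}
  one_mem' := fun s _ => by simp
  mul_mem' := by
    intro a b ha hb s hs
    rw [Equiv.Perm.coe_mul, Set.image_comp, hb s hs, ha s hs]
  inv_mem' := by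
    intro a ha s hs
    conv_lhs => rw [← ha s hs]
    rw [← Set.image_comp]
    simp

/-- `G₁ ≼_κ G₂` : there is a set `U` of permutations of cardinality `< κ` with
`G₁ ≤ ⟨G₂ ∪ U⟩`. -/
def Prec (κ : Cardinal.{u}) (G₁ G₂ : Subgroup (Equiv.Perm Ω)) : Prop :=
  ∃ U : Set (Equiv.Perm Ω), #U < κ ∧
    G₁ ≤ Subgroup.closure ((G₂ : Set (Equiv.Perm Ω)) ∪ U)

/-- `G₁ ≈_κ G₂`. -/
def CApprox (κ : Cardinal.{u}) (G₁ G₂ : Subgroup (Equiv.Perm Ω)) : Prop :=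
  Prec κ G₁ G₂ ∧ Prec κ G₂ G₁

/-- `G₁ ≼ G₂` (i.e. `≼_{ℵ₀}`, with `U` finite). -/
def PrecF (G₁ G₂ : Subgroup (Equiv.Perm Ω)) : Prop :=
  ∃ U : Set (Equiv.Perm Ω), U.Finite ∧
    G₁ ≤ Subgroup.closure ((G₂ : Set (Equiv.Perm Ω)) ∪ U)

/-- `G₁ ≈ G₂` (i.e. `≈_{ℵ₀}`). -/
def ApproxF (G₁ G₂ : Subgroup (Equiv.Perm Ω)) : Prop :=
  PrecF G₁ G₂ ∧ PrecF G₂ G₁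

/-- A generalized metric: a `[0,∞]`-valued metric. -/
structure IsGenMetric (d : Ω → Ω → ℝ≥0∞) : Prop where
  eq_zero_iff : ∀ α β, d α β = 0 ↔ α = β
  symm : ∀ α β, d α β = d β α
  triangle : ∀ α β γ, d α γ ≤ d α β + d β γ

/-- Open ball for a generalized metric. -/
def gball (d : Ω → Ω → ℝ≥0∞) (α : Ω) (r : ℝ≥0∞) : Set Ω := {β | d α β < r}

/-- `(Ω, d)` is `κ`-uncrowded: every ball of finite radius has `< κ` elements. -/
def Uncrowded (κ : Cardinal.{u}) (d : Ω → Ω → ℝ≥0∞) : Prop :=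
  ∀ (α : Ω) (r : ℝ≥0∞), r < ⊤ → #(gball d α r) < κ

/-- `(Ω, d)` is uniformly `κ`-uncrowded. -/
def UnifUncrowded (κ : Cardinal.{u}) (d : Ω → Ω → ℝ≥0∞) : Prop :=
  ∀ r : ℝ≥0∞, r < ⊤ → ∃ lam : Cardinal.{u}, lam < κ ∧ ∀ α : Ω, #(gball d α r) ≤ lam

/-- `g` is bounded with respect to `d` : `‖g‖_d = ⨆ α, d α (αg) < ∞`. -/
def BoundedPerm (d : Ω → Ω → ℝ≥0∞) (g : Equiv.Perm Ω) : Prop :=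
  (⨆ α : Ω, d α (g α)) < ⊤

/-- The function topology on `Sym(Ω)`: induced from the product topology on `Ω → Ω`
with `Ω` discrete. -/
def permTop (Ω : Type u) : TopologicalSpace (Equiv.Perm Ω) :=
  TopologicalSpace.induced (fun g : Equiv.Perm Ω => (g : Ω → Ω))
    (@Pi.topologicalSpace Ω (fun _ => Ω) (fun _ => ⊥))

/-- `G` is closed in `Sym(Ω)` in the function topology. -/
def FTClosed (G : Subgroup (Equiv.Perm Ω)) : Prop :=
  @IsClosed _ (permTop Ω) (G : Set (Equiv.Perm Ω))

/-- `G` is discrete in the function topology. -/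
def FTDiscrete (G : Subgroup (Equiv.Perm Ω)) : Prop :=
  @DiscreteTopology G
    (TopologicalSpace.induced (fun x : G => (x : Equiv.Perm Ω)) (permTop Ω))

/-- The orbit of `α` under a subgroup `H ≤ Sym(Ω)`. -/
def orb (H : Subgroup (Equiv.Perm Ω)) (α : Ω) : Set Ω := {β | ∃ g ∈ H, g α = β}

/-- A partition of `Ω`: a set of disjoint nonempty subsets with union `Ω`. -/
def IsPartition (A : Set (Set Ω)) : Prop :=
  (∀ s ∈ A, s.Nonempty) ∧ A.PairwiseDisjoint id ∧ ⋃₀ A = Set.univ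

/-- `A ∈ 𝒫`: a partition of `Ω` into finite subsets of unbounded cardinality. -/
def MemP (A : Set (Set Ω)) : Prop :=
  IsPartition A ∧ (∀ s ∈ A, s.Finite) ∧ ∀ n : ℕ, ∃ s ∈ A, (n : ℕ∞) < s.encard

/-- `A ∈ 𝒬`: a partition of `Ω` with a common finite bound on the cardinalities of
its members, infinitely many of which have more than one element. -/
def MemQ (A : Set (Set Ω)) : Prop :=
  IsPartition A ∧ (∃ n : ℕ, ∀ s ∈ A, s.encard ≤ (n : ℕ∞)) ∧
    {s | s ∈ A ∧ 1 < s.encard}.Infinite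

/-- The subgroup `FN(Ω,d)` of permutations of finite norm with respect to a
generalized metric `d`. -/
def FN (d : Ω → Ω → ℝ≥0∞) (hd : IsGenMetric d) : Subgroup (Equiv.Perm Ω) where
  carrier := {g | (⨆ α : Ω, d α (g α)) < ⊤}
  one_mem' := by
    have h : (⨆ α : Ω, d α ((1 : Equiv.Perm Ω) α)) ≤ 0 :=
      iSup_le fun α => le_of_eq ((hd.eq_zero_iff α ((1 : Equiv.Perm Ω) α)).2 rfl)
    exact lt_of_le_of_lt h (by simp)
  mul_mem' := by
    intro a b ha hb
    have h : (⨆ α : Ω, d α ((a * b) α)) ≤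
        (⨆ α : Ω, d α (b α)) + (⨆ α : Ω, d α (a α)) := by
      refine iSup_le fun α => ?_
      calc d α ((a * b) α) = d α (a (b α)) := by rw [Equiv.Perm.mul_apply]
        _ ≤ d α (b α) + d (b α) (a (b α)) := hd.triangle _ _ _
        _ ≤ _ := add_le_add (le_iSup (fun α : Ω => d α (b α)) α)
              (le_iSup (fun β : Ω => d β (a β)) (b α))
    exact lt_of_le_of_lt h (ENNReal.add_lt_top.2 ⟨hb, ha⟩)
  inv_mem' := by
    intro a ha
    have h : (⨆ α : Ω, d α (a⁻¹ α)) ≤ ⨆ β : Ω, d β (a β) := by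
      refine iSup_le fun α => ?_
      have e : d α (a⁻¹ α) = d (a⁻¹ α) (a (a⁻¹ α)) := by
        rw [← Equiv.Perm.mul_apply, mul_inv_cancel, Equiv.Perm.one_apply]; exact hd.symm _ _
      rw [e]
      exact le_iSup (fun β : Ω => d β (a β)) (a⁻¹ α)
    exact lt_of_le_of_lt h ha


/-! For (a) and the second half of (b), largeness of the blocks together with (uniform)
uncrowdedness yields, outside any finite set, two points of one block at arbitrarily large
distance. Choosing such pairs one after another gives infinitely many disjoint pairs with unbounded
distances, and the permutation swapping every pair lies in `S_(A)` but is unbounded.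

For (c) and the first half of (b), take the metric that is `1` between distinct points of a common
block and `∞` across blocks: its balls of finite radius lie in single blocks, and elements of
`S_(A)` move every point by at most `1`. -/

namespace IsPartition

variable {A : Set (Set Ω)}

theorem eq_of_mem_of_mem (hA : IsPartition A) {s t : Set Ω} (hs : s ∈ A) (ht : t ∈ A)
    {x : Ω} (hxs : x ∈ s) (hxt : x ∈ t) : s = t :=
  hA.2.1.elim hs ht (Set.not_disjoint_iff.2 ⟨x, hxs, hxt⟩)

theorem exists_mem (hA : IsPartition A) (x : Ω) : ∃ s ∈ A, x ∈ s :=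
  Set.mem_sUnion.1 (hA.2.2 ▸ Set.mem_univ x)

noncomputable def block (hA : IsPartition A) (x : Ω) : Set Ω :=
  (hA.exists_mem x).choose

theorem block_mem (hA : IsPartition A) (x : Ω) : hA.block x ∈ A :=
  (hA.exists_mem x).choose_spec.1

theorem mem_block (hA : IsPartition A) (x : Ω) : x ∈ hA.block x :=
  (hA.exists_mem x).choose_spec.2

theorem block_eq (hA : IsPartition A) {s : Set Ω} (hs : s ∈ A) {x : Ω} (hx : x ∈ s) :
    hA.block x = s :=
  hA.eq_of_mem_of_mem (hA.block_mem x) hs (hA.mem_block x) hx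

theorem block_apply_of_mem_SAgrp (hA : IsPartition A) {g : Equiv.Perm Ω} (hg : g ∈ SAgrp A)
    (x : Ω) : hA.block (g x) = hA.block x :=
  hA.block_eq (hA.block_mem x) (hg _ (hA.block_mem x) ▸ Set.mem_image_of_mem g (hA.mem_block x))

theorem mem_SAgrp_of_forall (hA : IsPartition A) {g : Equiv.Perm Ω}
    (h : ∀ x, ∃ s ∈ A, x ∈ s ∧ g x ∈ s) : g ∈ SAgrp A := by
  have hmaps : ∀ t ∈ A, ∀ x ∈ t, g x ∈ t := fun t ht x hx => by
    obtain ⟨s, hs, hxs, hgxs⟩ := h x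
    exact hA.eq_of_mem_of_mem hs ht hxs hx ▸ hgxs
  intro t ht
  refine (Set.image_subset_iff.2 (hmaps t ht)).antisymm fun y hy =>
    ⟨g⁻¹ y, ?_, g.apply_symm_apply y⟩
  obtain ⟨s, hs, hxs, hgxs⟩ := h (g⁻¹ y)
  rw [Equiv.Perm.inv_def, g.apply_symm_apply] at hgxs
  exact hA.eq_of_mem_of_mem hs ht hgxs hy ▸ hxs

theorem viaEmbedding_mem_SAgrp (hA : IsPartition A) {α : Type*} (σ : Equiv.Perm α) (e : α ↪ Ω)
    (h : ∀ a, ∃ s ∈ A, e a ∈ s ∧ e (σ a) ∈ s) : σ.viaEmbedding e ∈ SAgrp A := by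
  refine hA.mem_SAgrp_of_forall fun x => ?_
  by_cases hx : x ∈ Set.range e
  · obtain ⟨a, rfl⟩ := hx
    simpa only [Equiv.Perm.viaEmbedding_apply] using h a
  · obtain ⟨s, hs, hxs⟩ := hA.exists_mem x
    exact ⟨s, hs, hxs, by rwa [Equiv.Perm.viaEmbedding_apply_of_notMem _ _ _ hx]⟩

end IsPartition

section FibreMetric

variable {β : Type*}

open Classical in
noncomputable def fibreMetric (f : Ω → β) (x y : Ω) : ℝ≥0∞ :=
  if x = y then 0 else if f x = f y then 1 else ⊤

theorem fibreMetric_le_one {f : Ω → β} {x y : Ω} (h : f x = f y) : fibreMetric f x y ≤ 1 := by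
  unfold fibreMetric; split_ifs <;> simp_all

theorem fibreMetric_eq_top {f : Ω → β} {x y : Ω} (h : f x ≠ f y) : fibreMetric f x y = ⊤ := by
  unfold fibreMetric; split_ifs <;> simp_all

theorem one_le_fibreMetric {f : Ω → β} {x y : Ω} (h : x ≠ y) : 1 ≤ fibreMetric f x y := by
  unfold fibreMetric; split_ifs <;> simp_all

theorem isGenMetric_fibreMetric (f : Ω → β) : IsGenMetric (fibreMetric f) where
  eq_zero_iff x y := by unfold fibreMetric; split_ifs <;> simp_all
  symm x y := by unfold fibreMetric; split_ifs <;> simp_all [eq_comm]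
  triangle x y z := by
    by_cases hxz : x = z
    · simp [fibreMetric, hxz]
    by_cases hfxz : f x = f z
    · calc fibreMetric f x z ≤ 1 := fibreMetric_le_one hfxz
        _ ≤ _ := by
          by_cases hxy : x = y
          · exact le_add_left (one_le_fibreMetric (hxy ▸ hxz))
          · exact le_add_right (one_le_fibreMetric hxy)
    -- `f y` differs from `f x` or from `f z`, so one of the two summands is `⊤`.
    · by_cases hfxy : f x = f y
      · simp [fibreMetric_eq_top (hfxy ▸ hfxz)]
      · simp [fibreMetric_eq_top hfxy]

theorem gball_fibreMetric_subset (f : Ω → β) (x : Ω) {r : ℝ≥0∞} (hr : r < ⊤) :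
    gball (fibreMetric f) x r ⊆ {y | f y = f x} := fun y hy => by
  by_contra h
  exact (fibreMetric_eq_top (Ne.symm h) ▸ hy : ⊤ < r).not_gt hr

theorem boundedPerm_fibreMetric {f : Ω → β} {g : Equiv.Perm Ω} (hg : ∀ x, f (g x) = f x) :
    BoundedPerm (fibreMetric f) g :=
  (iSup_le fun x => fibreMetric_le_one (hg x).symm).trans_lt ENNReal.one_lt_top

end FibreMetric

theorem IsPartition.mk_gball_fibreMetric_block_le {A : Set (Set Ω)} (hA : IsPartition A) (x : Ω)
    {r : ℝ≥0∞} (hr : r < ⊤) : #(gball (fibreMetric hA.block) x r) ≤ #(hA.block x) :=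
  Cardinal.mk_le_mk_of_subset fun y hy =>
    (gball_fibreMetric_subset hA.block x hr hy : hA.block y = hA.block x) ▸ hA.mem_block y

section FarPairs

variable {A : Set (Set Ω)} {d : Ω → Ω → ℝ≥0∞}

def HasFarBlockPairs (A : Set (Set Ω)) (d : Ω → Ω → ℝ≥0∞) : Prop :=
  ∀ (F : Finset Ω) (n : ℕ), ∃ s ∈ A, ∃ x ∈ s \ ↑F, ∃ y ∈ s \ ↑F, x ≠ y ∧ (n : ℝ≥0∞) ≤ d x y

theorem exists_ne_le_dist (hd : IsGenMetric d) {t : Set Ω} {x : Ω} (n : ℕ)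
    (h : #(gball d x (n + 1)) < #t) : ∃ y ∈ t, x ≠ y ∧ (n : ℝ≥0∞) ≤ d x y := by
  obtain ⟨y, hyt, hy⟩ := Cardinal.sdiff_nonempty_of_mk_lt_mk h
  have hny : (n : ℝ≥0∞) + 1 ≤ d x y := not_lt.1 hy
  refine ⟨y, hyt, fun hxy => ?_, le_self_add.trans hny⟩
  rw [(hd.eq_zero_iff x y).2 hxy] at hny
  simp at hny

theorem lt_mk_sdiff_of_add_lt {μ : Cardinal.{u}} {s t : Set Ω} (h : μ + #t < #s) :
    μ < #(s \ t : Set Ω) :=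
  lt_of_not_ge fun hle => h.not_ge ((Cardinal.le_mk_sdiff_add_mk s t).trans (by gcongr))

theorem hasFarBlockPairs_of_le_mk (hd : IsGenMetric d) {κ : Cardinal.{u}} (hκ : ℵ₀ ≤ κ)
    (hunc : Uncrowded κ d) {s : Set Ω} (hs : s ∈ A) (hκs : κ ≤ #s) : HasFarBlockPairs A d := by
  intro F n
  have hF : #(F : Set Ω) < κ := (Cardinal.finset_card_lt_aleph0 F).trans_le hκ
  obtain ⟨x, hx⟩ := Cardinal.sdiff_nonempty_of_mk_lt_mk (hF.trans_le hκs)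
  have hball : #(gball d x (n + 1)) + #(F : Set Ω) < #s :=
    (Cardinal.add_lt_of_lt hκ (hunc x _ (by simp)) hF).trans_le hκs
  obtain ⟨y, hy, hxy, hdxy⟩ := exists_ne_le_dist hd n (lt_mk_sdiff_of_add_lt hball)
  exact ⟨s, hs, x, hx, y, hy, hxy, hdxy⟩

theorem hasFarBlockPairs_of_unifUncrowded (hd : IsGenMetric d) {κ : Cardinal.{u}} (hκ : ℵ₀ ≤ κ)
    (hunc : UnifUncrowded κ d) (hsizes : ¬ ∃ lam : Cardinal.{u}, lam < κ ∧ ∀ s ∈ A, #s ≤ lam) :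
    HasFarBlockPairs A d := by
  intro F n
  obtain ⟨μ, hμ, hball⟩ := hunc (n + 1) (by simp)
  have hF : #(F : Set Ω) < κ := (Cardinal.finset_card_lt_aleph0 F).trans_le hκ
  obtain ⟨s, hs, hμs⟩ : ∃ s ∈ A, μ + #(F : Set Ω) < #s := by
    by_contra! h
    exact hsizes ⟨_, Cardinal.add_lt_of_lt hκ hμ hF, h⟩
  obtain ⟨x, hx⟩ := Cardinal.sdiff_nonempty_of_mk_lt_mk (le_add_self.trans_lt hμs)
  obtain ⟨y, hy, hxy, hdxy⟩ :=
    exists_ne_le_dist hd n ((hball x).trans_lt (lt_mk_sdiff_of_add_lt hμs))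
  exact ⟨s, hs, x, hx, y, hy, hxy, hdxy⟩

theorem HasFarBlockPairs.exists_pairs (h : HasFarBlockPairs A d) :
    ∃ p : Bool × ℕ ↪ Ω, ∀ n : ℕ, ∃ s ∈ A, p (false, n) ∈ s ∧ p (true, n) ∈ s ∧
      (n : ℝ≥0∞) ≤ d (p (false, n)) (p (true, n)) := by
  classical
  choose s hs x hx y hy hxy hdxy using h
  -- The `n`-th pair is chosen outside the finite set `F n` of all points chosen before.
  let F : ℕ → Finset Ω := fun n => Nat.rec ∅ (fun n Fn => insert (x Fn n) (insert (y Fn n) Fn)) n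
  let p : Bool × ℕ → Ω := fun q => cond q.1 (y (F q.2) q.2) (x (F q.2) q.2)
  have hp_new : ∀ q : Bool × ℕ, p q ∉ F q.2 := by
    rintro ⟨_ | _, n⟩
    exacts [(hx _ n).2, (hy _ n).2]
  have hp_old : ∀ q n, q.2 < n → p q ∈ F n := by
    have hF : Monotone F := monotone_nat_of_le_succ fun n =>
      (Finset.subset_insert _ _).trans (Finset.subset_insert _ _)
    rintro ⟨c, m⟩ n hmn
    apply hF hmn
    cases c <;> simp [F, p]
  have hp : Function.Injective p := by
    rintro ⟨c, m⟩ ⟨c', n⟩ h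
    rcases lt_trichotomy m n with hmn | rfl | hmn
    · exact absurd (h ▸ hp_old (c, m) n hmn) (hp_new (c', n))
    · cases c <;> cases c'
      · rfl
      · exact absurd h (hxy _ m)
      · exact absurd h.symm (hxy _ m)
      · rfl
    · exact absurd (h.symm ▸ hp_old (c', n) m hmn) (hp_new (c, m))
  exact ⟨⟨p, hp⟩, fun n => ⟨s (F n) n, hs _ n, (hx _ n).1, (hy _ n).1, hdxy _ n⟩⟩

theorem IsPartition.not_forall_boundedPerm_of_hasFarBlockPairs (hA : IsPartition A)
    (h : HasFarBlockPairs A d) : ¬ ∀ g ∈ SAgrp A, BoundedPerm d g := by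
  obtain ⟨p, hp⟩ := h.exists_pairs
  choose s hs hps hpt hpd using hp
  let g := Equiv.Perm.viaEmbedding (Equiv.boolNot.prodCongr (Equiv.refl ℕ)) p
  have hg : g ∈ SAgrp A := hA.viaEmbedding_mem_SAgrp _ _ <| by
    rintro ⟨_ | _, n⟩
    exacts [⟨s n, hs n, hps n, hpt n⟩, ⟨s n, hs n, hpt n, hps n⟩]
  intro hb
  obtain ⟨N, hN⟩ := ENNReal.exists_nat_gt (hb g hg).ne
  refine hN.not_ge ((hpd N).trans ?_)
  calc d (p (false, N)) (p (true, N)) = d (p (false, N)) (g (p (false, N))) := by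
        rw [Equiv.Perm.viaEmbedding_apply]; rfl
    _ ≤ ⨆ α, d α (g α) := le_iSup (fun α => d α (g α)) _

end FarPairs

theorem stmt2_general {Ω : Type u} (A : Set (Set Ω)) (hA : IsPartition A)
    (κ : Cardinal.{u}) (hreg : κ.IsRegular) :
    ((∃ s ∈ A, κ ≤ #s) →
      ¬ ∃ d : Ω → Ω → ℝ≥0∞, IsGenMetric d ∧ Uncrowded κ d ∧
          ∀ g ∈ SAgrp A, BoundedPerm d g) ∧
    (((∀ s ∈ A, #s < κ) ∧ ¬ ∃ lam : Cardinal.{u}, lam < κ ∧ ∀ s ∈ A, #s ≤ lam) →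
      (∃ d : Ω → Ω → ℝ≥0∞, IsGenMetric d ∧ Uncrowded κ d ∧
          ∀ g ∈ SAgrp A, BoundedPerm d g) ∧
      ¬ ∃ d : Ω → Ω → ℝ≥0∞, IsGenMetric d ∧ UnifUncrowded κ d ∧
          ∀ g ∈ SAgrp A, BoundedPerm d g) ∧
    ((∃ lam : Cardinal.{u}, lam < κ ∧ ∀ s ∈ A, #s ≤ lam) →
      ∃ d : Ω → Ω → ℝ≥0∞, IsGenMetric d ∧ UnifUncrowded κ d ∧
          ∀ g ∈ SAgrp A, BoundedPerm d g) := by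
  have hbounded : ∀ g ∈ SAgrp A, BoundedPerm (fibreMetric hA.block) g := fun _ hg =>
    boundedPerm_fibreMetric (hA.block_apply_of_mem_SAgrp hg)
  refine ⟨fun ⟨s, hs, hκs⟩ ⟨d, hd, hunc, hb⟩ => ?_, fun ⟨hlt, hnb⟩ => ⟨?_, ?_⟩,
    fun ⟨lam, hlam, hle⟩ => ?_⟩
  · exact hA.not_forall_boundedPerm_of_hasFarBlockPairs
      (hasFarBlockPairs_of_le_mk hd hreg.aleph0_le hunc hs hκs) hb
  · refine ⟨_, isGenMetric_fibreMetric _, fun x r hr => ?_, hbounded⟩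
    exact (hA.mk_gball_fibreMetric_block_le x hr).trans_lt (hlt _ (hA.block_mem x))
  · rintro ⟨d, hd, hunc, hb⟩
    exact hA.not_forall_boundedPerm_of_hasFarBlockPairs
      (hasFarBlockPairs_of_unifUncrowded hd hreg.aleph0_le hunc hnb) hb
  · refine ⟨_, isGenMetric_fibreMetric _, fun r hr => ⟨lam, hlam, fun x => ?_⟩, hbounded⟩
    exact (hA.mk_gball_fibreMetric_block_le x hr).trans (hle _ (hA.block_mem x))

/-- Theorem 3.3. -/
theorem stmt2 {Ω : Type u} [Infinite Ω] (A : Set (Set Ω)) (hA : IsPartition A)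
    (κ : Cardinal.{u}) (hreg : κ.IsRegular) (hκ : κ ≤ #Ω) :
    ((∃ s ∈ A, κ ≤ #s) →
      ¬ ∃ d : Ω → Ω → ℝ≥0∞, IsGenMetric d ∧ Uncrowded κ d ∧
          ∀ g ∈ SAgrp A, BoundedPerm d g) ∧
    (((∀ s ∈ A, #s < κ) ∧ ¬ ∃ lam : Cardinal.{u}, lam < κ ∧ ∀ s ∈ A, #s ≤ lam) →
      (∃ d : Ω → Ω → ℝ≥0∞, IsGenMetric d ∧ Uncrowded κ d ∧
          ∀ g ∈ SAgrp A, BoundedPerm d g) ∧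
      ¬ ∃ d : Ω → Ω → ℝ≥0∞, IsGenMetric d ∧ UnifUncrowded κ d ∧
          ∀ g ∈ SAgrp A, BoundedPerm d g) ∧
    ((∃ lam : Cardinal.{u}, lam < κ ∧ ∀ s ∈ A, #s ≤ lam) →
      ∃ d : Ω → Ω → ℝ≥0∞, IsGenMetric d ∧ UnifUncrowded κ d ∧
          ∀ g ∈ SAgrp A, BoundedPerm d g) :=
  stmt2_general A hA κ hreg
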